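/- (Step 1 of the parabolic maximum principle.) Let 𝒟 ⊂ ℤ^d × ℤ be finite with 𝒟 ∪ 𝒟^p ⊆ B_R × [0,T], and assume that for every (x,n) ∈ 𝒟 one has (x,n+1) ∈ 𝒟 ∪ 𝒟^p. Let u : 𝒟 ∪ 𝒟^p → ℝ with M := max_𝒟 u > 0 and max_{𝒟^p} u ≤ 0. Then Λ ⊆ χ(Γ⁺) := ⋃_{(x,n)∈Γ⁺} χ(x,n). -/

import Mathlib

namespace ParabolicMaxStep1

/-- Points of the lattice `ℤ^d`. -/
abbrev Zd (d : ℕ) := Fin d → ℤ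

/-- `I_u(x,n)`: slopes `p ∈ ℝ^d` with `u(x,n) − u(y,m) ≥ p·(x−y)` for all
`(y,m) ∈ 𝒟 ∪ 𝒟^p` with `m > n`. -/
def Iset (d : ℕ) (D Dp : Finset (Zd d × ℤ)) (u : Zd d × ℤ → ℝ) (p : Zd d × ℤ) :
    Set (Fin d → ℝ) :=
  {q | ∀ r ∈ D ∪ Dp, p.2 < r.2 →
    ∑ i, q i * ((p.1 i - r.1 i : ℤ) : ℝ) ≤ u p - u r}

/-- The upper contact set `Γ⁺`. -/
def GammaPlus (d : ℕ) (D Dp : Finset (Zd d × ℤ)) (u : Zd d × ℤ → ℝ) (R : ℝ) :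
    Set (Zd d × ℤ) :=
  {p | p ∈ D ∧ ∃ q ∈ Iset d D Dp u p,
    R * Real.sqrt (∑ i, q i ^ 2) < u p - ∑ i, q i * (p.1 i : ℝ)}

/-- `χ(x,n) = {(p, q − x·p) : p ∈ I_u(x,n), q ∈ [u(x,n+1), u(x,n)]} ⊂ ℝ^{d+1}`. -/
def chi (d : ℕ) (D Dp : Finset (Zd d × ℤ)) (u : Zd d × ℤ → ℝ) (p : Zd d × ℤ) :
    Set ((Fin d → ℝ) × ℝ) :=
  {w | ∃ q ∈ Iset d D Dp u p, ∃ s ∈ Set.Icc (u (p.1, p.2 + 1)) (u p),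
    w = (q, s - ∑ i, (p.1 i : ℝ) * q i)}

/-- `Λ = {(ξ,h) : R‖ξ‖₂ < h < M/2}`. -/
def Lambda (d : ℕ) (R M : ℝ) : Set ((Fin d → ℝ) × ℝ) :=
  {w | R * Real.sqrt (∑ i, w.1 i ^ 2) < w.2 ∧ w.2 < M / 2}

/- The affine function `y ↦ h + ξ·y` is pushed down until it touches the graph of `u`: among
the points of `𝒟 ∪ 𝒟^p` where `u` lies strictly above it, take the latest one `(x,n)`. The
bound `R|ξ| < h < M/2` puts the maximum point of `u` above the plane and all of `𝒟^p` below it,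
so `(x,n) ∈ 𝒟`; everything later, in particular `(x,n+1)`, lies below the plane, which gives
`ξ ∈ I_u(x,n)` and places the height `h + ξ·x` in `[u(x,n+1), u(x,n)]`. -/

theorem _root_.Real.abs_sum_mul_le_sqrt_mul_sqrt {ι : Type*} (s : Finset ι) (f g : ι → ℝ) :
    |∑ i ∈ s, f i * g i| ≤ √(∑ i ∈ s, f i ^ 2) * √(∑ i ∈ s, g i ^ 2) := by
  refine abs_le.mpr ⟨?_, Real.sum_mul_le_sqrt_mul_sqrt s f g⟩
  have := Real.sum_mul_le_sqrt_mul_sqrt s (-f) g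
  simp only [Pi.neg_apply, neg_mul, Finset.sum_neg_distrib, neg_sq] at this
  linarith

theorem _root_.Finset.exists_max_image_of_mem {α β : Type*} [LinearOrder β] (s : Finset α)
    (f : α → β) (P : α → Prop) {a : α} (ha : a ∈ s) (hPa : P a) :
    ∃ x ∈ s, P x ∧ ∀ y ∈ s, P y → f y ≤ f x := by
  classical
  obtain ⟨x, hx, hmax⟩ := (s.filter P).exists_max_image f ⟨a, Finset.mem_filter.mpr ⟨ha, hPa⟩⟩
  obtain ⟨hxs, hPx⟩ := Finset.mem_filter.mp hx
  exact ⟨x, hxs, hPx, fun y hys hPy => hmax y (Finset.mem_filter.mpr ⟨hys, hPy⟩)⟩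

section Plane

variable {d : ℕ}

def plane (ξ : Fin d → ℝ) (h : ℝ) (y : Zd d) : ℝ := h + ∑ i, ξ i * (y i : ℝ)

theorem mem_Iset_of_le_plane {D Dp : Finset (Zd d × ℤ)} {u : Zd d × ℤ → ℝ} {x : Zd d × ℤ}
    {ξ : Fin d → ℝ} {h : ℝ} (hx : plane ξ h x.1 ≤ u x)
    (hlater : ∀ r ∈ D ∪ Dp, x.2 < r.2 → u r ≤ plane ξ h r.1) : ξ ∈ Iset d D Dp u x := by
  intro r hr hlt
  have hsplit : ∑ i, ξ i * ((x.1 i - r.1 i : ℤ) : ℝ) = plane ξ h x.1 - plane ξ h r.1 := by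
    simp only [plane, Int.cast_sub, mul_sub, Finset.sum_sub_distrib]
    ring
  linarith [hlater r hr hlt]

theorem mem_GammaPlus_of_le_plane {D Dp : Finset (Zd d × ℤ)} {u : Zd d × ℤ → ℝ} {R : ℝ}
    {x : Zd d × ℤ} {ξ : Fin d → ℝ} {h : ℝ} (hxD : x ∈ D) (hξ : ξ ∈ Iset d D Dp u x)
    (hh : R * √(∑ i, ξ i ^ 2) < h) (hx : plane ξ h x.1 ≤ u x) : x ∈ GammaPlus d D Dp u R :=
  ⟨hxD, ξ, hξ, by unfold plane at hx; linarith⟩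

theorem mem_chi_of_le_plane {D Dp : Finset (Zd d × ℤ)} {u : Zd d × ℤ → ℝ} {x : Zd d × ℤ}
    {ξ : Fin d → ℝ} {h : ℝ} (hξ : ξ ∈ Iset d D Dp u x)
    (hnext : u (x.1, x.2 + 1) ≤ plane ξ h x.1) (hx : plane ξ h x.1 ≤ u x) :
    (ξ, h) ∈ chi d D Dp u x := by
  refine ⟨ξ, hξ, plane ξ h x.1, ⟨hnext, hx⟩, ?_⟩
  simp only [plane, mul_comm (ξ _), add_sub_cancel_right]

theorem abs_sum_mul_le_of_sqrt_le {ξ : Fin d → ℝ} {y : Zd d} {R : ℝ}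
    (hy : √(∑ i, (y i : ℝ) ^ 2) ≤ R) : |∑ i, ξ i * (y i : ℝ)| ≤ R * √(∑ i, ξ i ^ 2) :=
  calc |∑ i, ξ i * (y i : ℝ)| ≤ √(∑ i, ξ i ^ 2) * √(∑ i, (y i : ℝ) ^ 2) :=
        Real.abs_sum_mul_le_sqrt_mul_sqrt _ _ _
    _ ≤ R * √(∑ i, ξ i ^ 2) := by rw [mul_comm]; gcongr

end Plane

theorem step1_cone_subset_chi {d : ℕ} (R T : ℝ)
    (D Dp : Finset (Zd d × ℤ))
    (hsub : ∀ q ∈ D ∪ Dp,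
      Real.sqrt (∑ i, (q.1 i : ℝ) ^ 2) ≤ R ∧ (0 : ℝ) ≤ (q.2 : ℝ) ∧ (q.2 : ℝ) ≤ T)
    (hclose : ∀ p ∈ D, (p.1, p.2 + 1) ∈ D ∪ Dp)
    (u : Zd d × ℤ → ℝ) (M : ℝ)
    (hMatt : ∃ p ∈ D, u p = M)
    (hbd : ∀ p ∈ Dp, u p ≤ 0) :
    Lambda d R M ⊆ ⋃ p ∈ GammaPlus d D Dp u R, chi d D Dp u p := by
  rintro ⟨ξ, h⟩ ⟨hcone, hhalf⟩
  have hdot (r) (hr : r ∈ D ∪ Dp) : |∑ i, ξ i * (r.1 i : ℝ)| ≤ R * √(∑ i, ξ i ^ 2) :=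
    abs_sum_mul_le_of_sqrt_le (hsub r hr).1
  obtain ⟨p, hpD, rfl⟩ := hMatt
  have hp : plane ξ h p.1 < u p := by
    have := (abs_le.mp (hdot p (Finset.mem_union_left _ hpD))).2
    unfold plane; dsimp only at hcone hhalf; linarith
  obtain ⟨x, hxS, hx, hlatest⟩ := Finset.exists_max_image_of_mem (D ∪ Dp) Prod.snd
    (fun r => plane ξ h r.1 < u r) (Finset.mem_union_left _ hpD) hp
  have hbelow (r) (hr : r ∈ D ∪ Dp) (hlt : x.2 < r.2) : u r ≤ plane ξ h r.1 :=
    not_lt.mp fun hr' => (hlt.trans_le (hlatest r hr hr')).false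
  have hxD : x ∈ D := by
    refine (Finset.mem_union.mp hxS).resolve_right fun hxDp => ?_
    have := (abs_le.mp (hdot x hxS)).1
    unfold plane at hx; dsimp only at hcone; linarith [hbd x hxDp]
  have hξ := mem_Iset_of_le_plane hx.le hbelow
  have hnext := hbelow _ (hclose x hxD) (lt_add_one x.2)
  exact Set.mem_iUnion₂.mpr
    ⟨x, mem_GammaPlus_of_le_plane hxD hξ hcone hx.le, mem_chi_of_le_plane hξ hnext hx.le⟩

end ParabolicMaxStep1
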